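/- arXiv:2309.02023 — 3 statements merged into one kernel-verified Lean document; each statement's English description precedes it below -/
import Mathlib

section
/- For real θ₁, θ₂ one has f(θ₁, θ₂) = 0 if and only if there exist integers p, q such that (θ₁, θ₂) = (2π/3 + 2pπ, −2π/3 + 2qπ) or (θ₁, θ₂) = (−2π/3 + 2pπ, 2π/3 + 2qπ). -/
open Real

/-- `f(θ₁, θ₂) = (1/9)·|1 + exp(i θ₁) + exp(i θ₂)|²`. -/
noncomputable def f (θ₁ θ₂ : ℝ) : ℝ :=
  (1 / 9) * ‖1 + Complex.exp (θ₁ * Complex.I) + Complex.exp (θ₂ * Complex.I)‖ ^ 2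

/-!
`f` vanishes exactly when the unit vectors `1`, `e^{iθ₁}`, `e^{iθ₂}` sum to zero. Then
`|1 + e^{iθ₁}| = 1`, which forces `cos θ₁ = -1/2`, and symmetrically `cos θ₂ = -1/2`; so each
`θⱼ` is `±2π/3` modulo `2π`, and the imaginary parts `sin θ₁ + sin θ₂ = 0` force opposite signs.
-/

theorem f_eq_zero_iff {θ₁ θ₂ : ℝ} :
    f θ₁ θ₂ = 0 ↔ 1 + cos θ₁ + cos θ₂ = 0 ∧ sin θ₁ + sin θ₂ = 0 := by
  simp [f, Complex.ext_iff, Complex.exp_ofReal_mul_I_re, Complex.exp_ofReal_mul_I_im]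

theorem cos_two_pi_div_three : cos (2 * π / 3) = -(1 / 2) := by
  rw [show 2 * π / 3 = π - π / 3 by ring, cos_pi_sub, cos_pi_div_three]

theorem sin_two_pi_div_three : sin (2 * π / 3) = √3 / 2 := by
  rw [show 2 * π / 3 = π - π / 3 by ring, sin_pi_sub, sin_pi_div_three]

theorem cos_eq_neg_half_of_one_add_cos_add_cos_eq_zero {a b : ℝ}
    (hc : 1 + cos a + cos b = 0) (hs : sin a + sin b = 0) :
    cos a = -(1 / 2) ∧ cos b = -(1 / 2) := by
  have hb := sin_sq_add_cos_sq b
  rw [show sin b = -sin a by linarith, show cos b = -1 - cos a by linarith] at hb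
  have ha : cos a = -(1 / 2) := by nlinarith [sin_sq_add_cos_sq a]
  exact ⟨ha, by linarith⟩

theorem cos_eq_neg_half_iff {θ : ℝ} :
    cos θ = -(1 / 2) ↔ ∃ k : ℤ, θ = 2 * π / 3 + 2 * k * π ∨ θ = -(2 * π / 3) + 2 * k * π := by
  rw [← cos_two_pi_div_three, eq_comm, cos_eq_cos_iff]
  simp only [add_comm (2 * π / 3), sub_eq_neg_add]

theorem cos_add_two_int_mul_pi (x : ℝ) (k : ℤ) : cos (x + 2 * k * π) = cos x := by
  rw [← cos_add_int_mul_two_pi x k]; ring_nf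

theorem sin_add_two_int_mul_pi (x : ℝ) (k : ℤ) : sin (x + 2 * k * π) = sin x := by
  rw [← sin_add_int_mul_two_pi x k]; ring_nf

theorem stmt_1 (θ₁ θ₂ : ℝ) :
    f θ₁ θ₂ = 0 ↔
      ∃ p q : ℤ,
        (θ₁ = 2 * π / 3 + 2 * p * π ∧ θ₂ = -(2 * π / 3) + 2 * q * π) ∨
        (θ₁ = -(2 * π / 3) + 2 * p * π ∧ θ₂ = 2 * π / 3 + 2 * q * π) := by
  have hsqrt3 : 0 < √3 := by positivity
  rw [f_eq_zero_iff]
  constructor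
  · rintro ⟨hc, hs⟩
    obtain ⟨h₁, h₂⟩ := cos_eq_neg_half_of_one_add_cos_add_cos_eq_zero hc hs
    obtain ⟨p, rfl | rfl⟩ := cos_eq_neg_half_iff.1 h₁ <;>
      obtain ⟨q, rfl | rfl⟩ := cos_eq_neg_half_iff.1 h₂ <;>
      simp only [sin_add_two_int_mul_pi, sin_neg, sin_two_pi_div_three] at hs
    · linarith
    · exact ⟨p, q, .inl ⟨rfl, rfl⟩⟩
    · exact ⟨p, q, .inr ⟨rfl, rfl⟩⟩
    · linarith
  · rintro ⟨p, q, ⟨rfl, rfl⟩ | ⟨rfl, rfl⟩⟩ <;>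
      simp only [cos_add_two_int_mul_pi, sin_add_two_int_mul_pi, cos_neg, sin_neg,
        cos_two_pi_div_three, sin_two_pi_div_three] <;>
      constructor <;> ring
end

section
/- There exist constants C > 0 and ε > 0 such that for every k ∈ ℝ² with ‖k − K‖ ≤ ε one has |arccos(√(f(2π k·v₁, 2π k·v₂))) − (π/2 − (π/√3)·‖k − K‖)| ≤ C·‖k − K‖². (This is the conical, Dirac-point behaviour of the first dispersion surface ω(k)·L = arccos(√(f(2π k·v₁, 2π k·v₂))) of the hexagonal quantum graph near the Brillouin-zone vertex K.) -/
open Real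

/-- The lattice vector `v₁ = (√3/2, −1/2)` in Euclidean `ℝ²`. -/
noncomputable def v₁ : EuclideanSpace ℝ (Fin 2) := !₂[Real.sqrt 3 / 2, -(1 / 2)]

/-- The lattice vector `v₂ = (√3/2, 1/2)` in Euclidean `ℝ²`. -/
noncomputable def v₂ : EuclideanSpace ℝ (Fin 2) := !₂[Real.sqrt 3 / 2, 1 / 2]

/-- The Brillouin-zone vertex `K = (0, 2/3)` in Euclidean `ℝ²`. -/
noncomputable def Kpt : EuclideanSpace ℝ (Fin 2) := !₂[0, 2 / 3]

/-!
Write `k = K + p`. The phases are `θ₁ = -2π/3 + a`, `θ₂ = 2π/3 + b` with `a = 2π⟪p, v₁⟫`,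
`b = 2π⟪p, v₂⟫`, so with `ω = e^{2πi/3}` the amplitude is `1 + ω̄ e^{ia} + ω e^{ib}`. Since
`1 + ω̄ + ω = 0` it differs from its linear part `i (ω̄ a + ω b)` by `O(a² + b²)`, and that linear
part has modulus exactly `√3 π ‖p‖`: this is the cone. Hence `√f = (π/√3)‖p‖ + O(‖p‖²)`, and the
estimate passes through `arccos = π/2 - arcsin` because `arcsin` is Lipschitz near `0` and
`arcsin (sin t) = t`, with `|sin t - t| = O(t³)`.
-/

namespace Real

lemma cos_two_pi_div_three : cos (2 * π / 3) = -1 / 2 := by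
  rw [show 2 * π / 3 = π - π / 3 by ring, cos_pi_sub, cos_pi_div_three]; norm_num

lemma sin_two_pi_div_three : sin (2 * π / 3) = √3 / 2 := by
  rw [show 2 * π / 3 = π - π / 3 by ring, sin_pi_sub, sin_pi_div_three]

lemma abs_arcsin_sub_arcsin_le {x y : ℝ} (hx : |x| ≤ 1 / 2) (hy : |y| ≤ 1 / 2) :
    |arcsin x - arcsin y| ≤ 2 * |x - y| := by
  have hball : ∀ z ∈ Set.Icc (-(1 / 2) : ℝ) (1 / 2), z ≠ -1 ∧ z ≠ 1 := fun z hz ↦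
    ⟨by linarith [hz.1], by linarith [hz.2]⟩
  have hderiv : ∀ z ∈ Set.Icc (-(1 / 2) : ℝ) (1 / 2), ‖deriv arcsin z‖ ≤ 2 := by
    intro z hz
    have hz2 : z ^ 2 ≤ 1 / 4 := by nlinarith [hz.1, hz.2]
    have hsqrt : 1 / 2 ≤ √(1 - z ^ 2) := le_sqrt_of_sq_le (by linarith)
    rw [deriv_arcsin, norm_of_nonneg (by positivity), div_le_iff₀ (by linarith)]
    linarith
  have := (convex_Icc (-(1 / 2) : ℝ) (1 / 2)).norm_image_sub_le_of_norm_deriv_le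
    (fun z hz ↦ differentiableAt_arcsin.2 (hball z hz)) hderiv (abs_le.1 hy) (abs_le.1 hx)
  simpa only [norm_eq_abs] using this

lemma abs_arccos_sub_pi_div_two_sub_le {s t : ℝ} (hs : |s| ≤ 1 / 2) (ht : |t| ≤ 1 / 2) :
    |arccos s - (π / 2 - t)| ≤ 2 * (|s - t| + |t| ^ 3 / 6) := by
  have ht' : arcsin (sin t) = t := by
    obtain ⟨h₁, h₂⟩ := abs_le.1 ht
    exact arcsin_sin (by linarith [pi_gt_three]) (by linarith [pi_gt_three])
  have hsin : |sin t| ≤ 1 / 2 := abs_sin_le_abs.trans ht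
  calc |arccos s - (π / 2 - t)| = |arcsin (sin t) - arcsin s| := by
        rw [arccos_eq_pi_div_two_sub_arcsin, ht']; congr 1; ring
    _ ≤ 2 * |sin t - s| := abs_arcsin_sub_arcsin_le hsin hs
    _ ≤ 2 * (|t - sin t| + |s - t|) := by
        gcongr
        simpa only [abs_sub_comm] using abs_sub_le (sin t) t s
    _ ≤ 2 * (|s - t| + |t| ^ 3 / 6) := by linarith [abs_sub_sin_le t]

end Real

namespace Complex

lemma norm_exp_ofReal_mul_I_sub_one_sub_le {a : ℝ} (ha : |a| ≤ 1) :
    ‖exp (a * I) - 1 - a * I‖ ≤ a ^ 2 := by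
  have h : ‖(a : ℂ) * I‖ = |a| := by simp
  have := norm_exp_sub_one_sub_id_le (x := a * I) (by rwa [h])
  rwa [h, sq_abs] at this

lemma abs_norm_one_add_mul_exp_sub_norm_le {u v : ℂ} (huv : 1 + u + v = 0) (hu : ‖u‖ = 1)
    (hv : ‖v‖ = 1) {a b : ℝ} (ha : |a| ≤ 1) (hb : |b| ≤ 1) :
    |‖1 + u * exp (a * I) + v * exp (b * I)‖ - ‖u * a + v * b‖| ≤ a ^ 2 + b ^ 2 := by
  have hdecomp : 1 + u * exp (a * I) + v * exp (b * I) - I * (u * a + v * b) =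
      u * (exp (a * I) - 1 - a * I) + v * (exp (b * I) - 1 - b * I) := by
    linear_combination huv
  calc |‖1 + u * exp (a * I) + v * exp (b * I)‖ - ‖u * a + v * b‖|
      = |‖1 + u * exp (a * I) + v * exp (b * I)‖ - ‖I * (u * a + v * b)‖| := by
        rw [norm_mul, norm_I, one_mul]
    _ ≤ ‖u * (exp (a * I) - 1 - a * I) + v * (exp (b * I) - 1 - b * I)‖ :=
        hdecomp ▸ abs_norm_sub_norm_le (1 + u * exp (a * I) + v * exp (b * I)) _
    _ ≤ ‖exp (a * I) - 1 - a * I‖ + ‖exp (b * I) - 1 - b * I‖ :=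
        (norm_add_le _ _).trans_eq (by rw [norm_mul, norm_mul, hu, hv, one_mul, one_mul])
    _ ≤ a ^ 2 + b ^ 2 := add_le_add (norm_exp_ofReal_mul_I_sub_one_sub_le ha)
        (norm_exp_ofReal_mul_I_sub_one_sub_le hb)

end Complex

section CubeRoot

open Complex ComplexConjugate

noncomputable def ω : ℂ := -1 / 2 + √3 / 2 * I

lemma conj_ω : conj ω = -1 / 2 - √3 / 2 * I := by
  simp [ω, map_ofNat, sub_eq_add_neg]

lemma norm_ω : ‖ω‖ = 1 := by
  have h3 : √3 ^ 2 = 3 := Real.sq_sqrt (by norm_num)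
  rw [ω, show (-1 / 2 + √3 / 2 * I : ℂ) = ↑(-1 / 2 : ℝ) + ↑(√3 / 2) * I by push_cast; ring,
    norm_add_mul_I, Real.sqrt_eq_one]
  linear_combination h3 / 4

lemma one_add_conj_ω_add_ω : 1 + conj ω + ω = 0 := by
  rw [conj_ω, ω]; ring

lemma exp_two_pi_div_three_add_mul_I (a : ℝ) :
    exp (↑(2 * π / 3 + a) * I) = ω * exp (a * I) := by
  rw [ofReal_add, add_mul, Complex.exp_add, exp_mul_I, ← ofReal_cos, ← ofReal_sin,
    Real.cos_two_pi_div_three, Real.sin_two_pi_div_three, ω]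
  push_cast; ring

lemma exp_neg_two_pi_div_three_add_mul_I (a : ℝ) :
    exp (↑(-(2 * π / 3) + a) * I) = conj ω * exp (a * I) := by
  rw [ofReal_add, add_mul, Complex.exp_add, exp_mul_I, ← ofReal_cos, ← ofReal_sin, Real.cos_neg,
    Real.sin_neg, Real.cos_two_pi_div_three, Real.sin_two_pi_div_three, conj_ω]
  push_cast; ring

lemma norm_conj_ω_mul_add_ω_mul (x y : ℝ) :
    ‖conj ω * x + ω * y‖ = √((x + y) ^ 2 + 3 * (y - x) ^ 2) / 2 := by
  have h3 : √3 ^ 2 = 3 := Real.sq_sqrt (by norm_num)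
  rw [show conj ω * x + ω * y = ↑(-(x + y) / 2) + ↑(√3 / 2 * (y - x)) * I by
      rw [conj_ω, ω]; push_cast; ring,
    norm_add_mul_I, Real.sqrt_eq_iff_mul_self_eq (by positivity) (by positivity),
    div_mul_div_comm, Real.mul_self_sqrt (by positivity)]
  linear_combination (y - x) ^ 2 / 4 * h3

end CubeRoot

section Hexagonal

variable (p : EuclideanSpace ℝ (Fin 2))

lemma inner_v₁ : inner ℝ p v₁ = √3 / 2 * p 0 - p 1 / 2 := by
  simp only [v₁, PiLp.inner_apply, RCLike.inner_apply, ringHom_apply, Fin.sum_univ_two,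
    Matrix.cons_val_zero, Matrix.cons_val_one, Matrix.cons_val_fin_one]
  ring

lemma inner_v₂ : inner ℝ p v₂ = √3 / 2 * p 0 + p 1 / 2 := by
  simp only [v₂, PiLp.inner_apply, RCLike.inner_apply, ringHom_apply, Fin.sum_univ_two,
    Matrix.cons_val_zero, Matrix.cons_val_one, Matrix.cons_val_fin_one]
  ring

lemma norm_sq_eq_fin_two : ‖p‖ ^ 2 = p 0 ^ 2 + p 1 ^ 2 := by
  simp [EuclideanSpace.norm_sq_eq, Fin.sum_univ_two]

lemma inner_Kpt_v₁ : inner ℝ Kpt v₁ = -(1 / 3) := by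
  norm_num [inner_v₁, Kpt]

lemma inner_Kpt_v₂ : inner ℝ Kpt v₂ = 1 / 3 := by
  norm_num [inner_v₂, Kpt]

lemma norm_v₁ : ‖v₁‖ = 1 := by
  have h3 : √3 ^ 2 = 3 := Real.sq_sqrt (by norm_num)
  rw [← sq_eq_sq₀ (norm_nonneg _) zero_le_one, norm_sq_eq_fin_two]
  norm_num [v₁, div_pow, h3]

lemma norm_v₂ : ‖v₂‖ = 1 := by
  have h3 : √3 ^ 2 = 3 := Real.sq_sqrt (by norm_num)
  rw [← sq_eq_sq₀ (norm_nonneg _) zero_le_one, norm_sq_eq_fin_two]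
  norm_num [v₂, div_pow, h3]

lemma sq_inner_add_inner_add_three_mul_sq :
    (inner ℝ p v₁ + inner ℝ p v₂) ^ 2 + 3 * (inner ℝ p v₂ - inner ℝ p v₁) ^ 2 = 3 * ‖p‖ ^ 2 := by
  have h3 : √3 ^ 2 = 3 := Real.sq_sqrt (by norm_num)
  rw [inner_v₁, inner_v₂, norm_sq_eq_fin_two]
  linear_combination p 0 ^ 2 * h3

end Hexagonal

open Complex in
lemma sqrt_f (θ₁ θ₂ : ℝ) : √(f θ₁ θ₂) = ‖1 + exp (θ₁ * I) + exp (θ₂ * I)‖ / 3 := by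
  rw [f, show (1 / 9 : ℝ) * ‖1 + exp (θ₁ * I) + exp (θ₂ * I)‖ ^ 2 =
    (‖1 + exp (θ₁ * I) + exp (θ₂ * I)‖ / 3) ^ 2 by ring, Real.sqrt_sq (by positivity)]

open Complex ComplexConjugate in
lemma abs_sqrt_f_sub_le (p : EuclideanSpace ℝ (Fin 2)) (hp : 2 * π * ‖p‖ ≤ 1) :
    |√(f (2 * π * inner ℝ (Kpt + p) v₁) (2 * π * inner ℝ (Kpt + p) v₂)) - π / √3 * ‖p‖| ≤
      8 * π ^ 2 / 3 * ‖p‖ ^ 2 := by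
  have h3 : √3 ^ 2 = 3 := Real.sq_sqrt (by norm_num)
  set a := 2 * π * inner ℝ p v₁
  set b := 2 * π * inner ℝ p v₂
  have hθ₁ : 2 * π * inner ℝ (Kpt + p) v₁ = -(2 * π / 3) + a := by
    rw [inner_add_left, inner_Kpt_v₁]; ring
  have hθ₂ : 2 * π * inner ℝ (Kpt + p) v₂ = 2 * π / 3 + b := by
    rw [inner_add_left, inner_Kpt_v₂]; ring
  have ha : |a| ≤ 2 * π * ‖p‖ := by
    rw [abs_mul, abs_of_pos (by positivity)]
    gcongr
    simpa [norm_v₁] using abs_real_inner_le_norm p v₁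
  have hb : |b| ≤ 2 * π * ‖p‖ := by
    rw [abs_mul, abs_of_pos (by positivity)]
    gcongr
    simpa [norm_v₂] using abs_real_inner_le_norm p v₂
  have hab : a ^ 2 + b ^ 2 ≤ 8 * π ^ 2 * ‖p‖ ^ 2 := by
    nlinarith [sq_le_sq' (abs_le.1 ha).1 (abs_le.1 ha).2, sq_le_sq' (abs_le.1 hb).1 (abs_le.1 hb).2]
  have hlin : ‖conj ω * a + ω * b‖ = √3 * π * ‖p‖ := by
    rw [norm_conj_ω_mul_add_ω_mul, show (a + b) ^ 2 + 3 * (b - a) ^ 2 = (2 * √3 * π * ‖p‖) ^ 2 by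
      linear_combination 4 * π ^ 2 * sq_inner_add_inner_add_three_mul_sq p
        - 4 * π ^ 2 * ‖p‖ ^ 2 * h3, Real.sqrt_sq (by positivity)]
    ring
  have hcone := abs_norm_one_add_mul_exp_sub_norm_le one_add_conj_ω_add_ω ((norm_conj ω).trans norm_ω)
    norm_ω (ha.trans hp) (hb.trans hp)
  rw [hlin] at hcone
  rw [hθ₁, hθ₂, sqrt_f, exp_neg_two_pi_div_three_add_mul_I, exp_two_pi_div_three_add_mul_I]
  have hπ : π / √3 * ‖p‖ = √3 * π * ‖p‖ / 3 := by
    rw [div_mul_eq_mul_div, div_eq_div_iff (by positivity) three_ne_zero]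
    linear_combination -(π * ‖p‖) * h3
  rw [hπ, ← sub_div, abs_div, abs_of_pos (three_pos : (0 : ℝ) < 3)]
  linarith

theorem stmt_5 :
    ∃ C > (0 : ℝ), ∃ ε > (0 : ℝ), ∀ k : EuclideanSpace ℝ (Fin 2), ‖k - Kpt‖ ≤ ε →
      |Real.arccos (Real.sqrt (f (2 * π * (inner ℝ k v₁ : ℝ)) (2 * π * (inner ℝ k v₂ : ℝ)))) -
        (π / 2 - (π / Real.sqrt 3) * ‖k - Kpt‖)| ≤ C * ‖k - Kpt‖ ^ 2 := by
  refine ⟨60, by norm_num, 1 / 20, by norm_num, fun k hk ↦ ?_⟩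
  obtain ⟨p, rfl⟩ : ∃ p, k = Kpt + p := ⟨k - Kpt, by abel⟩
  rw [add_sub_cancel_left] at hk ⊢
  have hp0 : 0 ≤ ‖p‖ := norm_nonneg p
  have hπ : π < 3.15 := pi_lt_d2
  have h3 : 1.7 ≤ √3 := Real.le_sqrt_of_sq_le (by norm_num)
  have hslope : π / √3 ≤ 2 := by
    rw [div_le_iff₀ (by positivity)]; linarith
  have hcone := abs_sqrt_f_sub_le p (by nlinarith)
  set s := √(f (2 * π * inner ℝ (Kpt + p) v₁) (2 * π * inner ℝ (Kpt + p) v₂))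
  set t := π / √3 * ‖p‖
  have hcoef : 8 * π ^ 2 / 3 ≤ 27 := by nlinarith [pi_pos]
  have hst : |s - t| ≤ 27 * ‖p‖ ^ 2 := hcone.trans (by gcongr)
  have ht : |t| ≤ 2 * ‖p‖ := by
    rw [abs_of_nonneg (by positivity)]; exact mul_le_mul_of_nonneg_right hslope hp0
  have hs : |s| ≤ 1 / 2 := by
    rw [abs_of_nonneg (Real.sqrt_nonneg _)]
    nlinarith [(abs_le.1 hst).2, le_abs_self t]
  calc _ ≤ 2 * (|s - t| + |t| ^ 3 / 6) :=
        Real.abs_arccos_sub_pi_div_two_sub_le hs (ht.trans (by linarith))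
    _ ≤ 2 * (27 * ‖p‖ ^ 2 + (2 * ‖p‖) ^ 3 / 6) := by gcongr
    _ ≤ 60 * ‖p‖ ^ 2 := by nlinarith
end

section
/- Let β ∈ ℝ and set c = cos(2πβ). For every y ∈ ℝ, there exists k ∈ ℝ such that y = |1 + exp(2πik) + exp(2πi(k + β))|² if and only if |y − 3 − 2c| ≤ 2√(2 + 2c). (This characterizes, for fixed quasi-momentum β along the zigzag direction, the set of values of 9cos²(√λ·L) corresponding to the essential spectrum of the truncated graph operators.) -/
/-!
Write the sum as `1 + e^{2πik} w` with `w = 1 + e^{2πiβ}`, so that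
`‖1 + e^{2πik} w‖² = 1 + ‖w‖² + 2 Re (e^{2πik} w)` and `‖w‖² = 2 + 2 cos (2πβ)`.
As `k` varies, `Re (e^{2πik} w) = ‖w‖ cos (2πk + arg w)` sweeps out exactly `[-‖w‖, ‖w‖]`.
-/

open Real

namespace Complex

lemma norm_one_add_sq (z : ℂ) : ‖1 + z‖ ^ 2 = 1 + 2 * z.re + ‖z‖ ^ 2 := by
  rw [Complex.sq_norm, Complex.sq_norm, normSq_add]
  simp [add_right_comm]

lemma norm_one_add_exp_mul_I_sq (φ : ℝ) : ‖1 + exp (φ * I)‖ ^ 2 = 2 + 2 * Real.cos φ := by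
  rw [norm_one_add_sq, exp_ofReal_mul_I_re, norm_exp_ofReal_mul_I]
  ring

lemma re_exp_mul_I_mul (a : ℂ) (θ : ℝ) : (exp (θ * I) * a).re = ‖a‖ * Real.cos (θ + arg a) := by
  conv_lhs => rw [← norm_mul_exp_arg_mul_I a, mul_left_comm, ← exp_add, ← add_mul, ← ofReal_add]
  rw [re_ofReal_mul, exp_ofReal_mul_I_re]

lemma abs_re_exp_mul_I_mul_le (a : ℂ) (θ : ℝ) : |(exp (θ * I) * a).re| ≤ ‖a‖ := by
  simpa [norm_exp_ofReal_mul_I] using abs_re_le_norm (exp (θ * I) * a)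

lemma exists_re_exp_mul_I_mul_eq (a : ℂ) {t : ℝ} (ht : |t| ≤ ‖a‖) :
    ∃ θ : ℝ, (exp (θ * I) * a).re = t := by
  have hcont : Continuous fun θ : ℝ ↦ (exp (θ * I) * a).re := by fun_prop
  have hmin : (exp ((π - arg a : ℝ) * I) * a).re = -‖a‖ := by
    rw [re_exp_mul_I_mul, sub_add_cancel, Real.cos_pi, mul_neg_one]
  have hmax : (exp ((-arg a : ℝ) * I) * a).re = ‖a‖ := by
    rw [re_exp_mul_I_mul, neg_add_cancel, Real.cos_zero, mul_one]
  have hmem := intermediate_value_univ (π - arg a) (-arg a) hcont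
  rw [hmin, hmax] at hmem
  exact hmem (abs_le.mp ht)

end Complex

open Complex in
theorem stmt_7 (β y : ℝ) :
    (∃ k : ℝ, y = ‖1 + Complex.exp (2 * π * k * Complex.I) +
        Complex.exp (2 * π * (k + β) * Complex.I)‖ ^ 2) ↔
      |y - 3 - 2 * Real.cos (2 * π * β)| ≤ 2 * Real.sqrt (2 + 2 * Real.cos (2 * π * β)) := by
  set w := 1 + exp ((2 * π * β : ℝ) * I)
  have hw : ‖w‖ ^ 2 = 2 + 2 * Real.cos (2 * π * β) := norm_one_add_exp_mul_I_sq _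
  have hsum (k : ℝ) : ‖1 + exp (2 * π * k * I) + exp (2 * π * (k + β) * I)‖ ^ 2
      = 3 + 2 * Real.cos (2 * π * β) + 2 * (exp ((2 * π * k : ℝ) * I) * w).re := by
    rw [add_assoc, show exp (2 * π * k * I) + exp (2 * π * (k + β) * I)
      = exp ((2 * π * k : ℝ) * I) * w by
        rw [mul_one_add, ← Complex.exp_add]; push_cast; ring_nf,
      norm_one_add_sq, norm_mul, norm_exp_ofReal_mul_I, one_mul, hw]
    ring
  rw [← hw, sqrt_sq (norm_nonneg w)]
  constructor
  · rintro ⟨k, rfl⟩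
    rw [hsum]
    obtain ⟨hlo, hhi⟩ := abs_le.mp (abs_re_exp_mul_I_mul_le w (2 * π * k))
    exact abs_le.mpr ⟨by linarith, by linarith⟩
  · intro h
    obtain ⟨θ, hθ⟩ := exists_re_exp_mul_I_mul_eq w (t := (y - 3 - 2 * Real.cos (2 * π * β)) / 2)
      (by rw [abs_div, abs_two]; linarith)
    refine ⟨θ / (2 * π), ?_⟩
    rw [hsum, mul_div_cancel₀ θ (by positivity), hθ]
    ring
end
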